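/- For all vectors z_1,…,z_9 ∈ ℂ^4 the following polynomial identity (a three-term cluster exchange relation) holds: ⟨1678⟩·⟨12*567*789⟩ = ⟨1278⟩·⟨1567⟩·⟨6789⟩ + ⟨1267⟩·⟨1789⟩·⟨5678⟩, where ⟨12*567*789⟩ denotes the chain polynomial with blocks (z_1,z_2), (z_5,z_6,z_7), (z_7,z_8,z_9). -/

import Mathlib

/-!
The third term of the chain polynomial `⟨12*567*789⟩` contains `⟨7789⟩ = 0`, so
`⟨12*567*789⟩ = ⟨1267⟩⟨5789⟩ - ⟨1257⟩⟨6789⟩`. Multiplying by `⟨1678⟩`, the identity becomes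
the sum of `⟨1267⟩` times the three-term Plücker relation with common pair `7, 8` and `⟨6789⟩`
times the one with common pair `1, 7`.
-/

noncomputable section

/-- `⟨u₁ u₂ u₃ u₄⟩ = det[u₁ u₂ u₃ u₄]`: the determinant of the `4 × 4` complex matrix with
columns `u₁, u₂, u₃, u₄` in the listed order. -/
def det4 (a b c d : Fin 4 → ℂ) : ℂ :=
  Matrix.det (Matrix.of fun i j => ![a, b, c, d] j i)

/-- The chain polynomial `⟨X * Y * U⟩` for blocks `X = (x₁,x₂)`, `Y = (y₁,y₂,y₃)`,
`U = (u₁,u₂,u₃)` of sizes `(2,3,3)`: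
`Σ_{w ∈ S₃¹} sign(w)·det[x₁ x₂ y_{w(2)} y_{w(3)}]·det[y_{w(1)} u₁ u₂ u₃]`. -/
def chain233 (x1 x2 y1 y2 y3 u1 u2 u3 : Fin 4 → ℂ) : ℂ :=
  det4 x1 x2 y2 y3 * det4 y1 u1 u2 u3
    - det4 x1 x2 y1 y3 * det4 y2 u1 u2 u3
    + det4 x1 x2 y1 y2 * det4 y3 u1 u2 u3

lemma det4_expand (a b c d : Fin 4 → ℂ) :
    det4 a b c d =
      a 0 * b 1 * c 2 * d 3 - a 0 * b 1 * c 3 * d 2 - a 0 * b 2 * c 1 * d 3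
      + a 0 * b 2 * c 3 * d 1 + a 0 * b 3 * c 1 * d 2 - a 0 * b 3 * c 2 * d 1
      - a 1 * b 0 * c 2 * d 3 + a 1 * b 0 * c 3 * d 2 + a 1 * b 2 * c 0 * d 3
      - a 1 * b 2 * c 3 * d 0 - a 1 * b 3 * c 0 * d 2 + a 1 * b 3 * c 2 * d 0
      + a 2 * b 0 * c 1 * d 3 - a 2 * b 0 * c 3 * d 1 - a 2 * b 1 * c 0 * d 3
      + a 2 * b 1 * c 3 * d 0 + a 2 * b 3 * c 0 * d 1 - a 2 * b 3 * c 1 * d 0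
      - a 3 * b 0 * c 1 * d 2 + a 3 * b 0 * c 2 * d 1 + a 3 * b 1 * c 0 * d 2
      - a 3 * b 1 * c 2 * d 0 - a 3 * b 2 * c 0 * d 1 + a 3 * b 2 * c 1 * d 0 := by
  rw [det4, Matrix.det_succ_row_zero]
  simp only [Nat.succ_eq_add_one, Nat.reduceAdd, Matrix.cons_val', Matrix.cons_val_fin_one, Fin.isValue,
    Matrix.of_apply, Matrix.det_fin_three, Matrix.submatrix_apply, Fin.succ_zero_eq_one, Fin.succAbove,
    Fin.castSucc_zero, Fin.succ_one_eq_two, Fin.castSucc_one, Fin.reduceSucc, Fin.reduceCastSucc, Fin.sum_univ_succ,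
    Fin.coe_ofNat_eq_mod, Nat.zero_mod, pow_zero, Matrix.cons_val_zero, one_mul, lt_self_iff_false, ↓reduceIte,
    Matrix.cons_val_one, not_lt_zero, Matrix.cons_val, Fin.val_succ, Matrix.cons_val_succ, Fin.succ_pos, zero_add,
    pow_one, neg_mul, Fin.lt_one_iff, Fin.reduceEq, even_two, Even.neg_pow, one_pow, Fin.reduceLT, Finset.univ_unique,
    Fin.default_eq_zero, Fin.val_eq_zero, Finset.sum_singleton]
  ring

lemma det4_self_left (a c d : Fin 4 → ℂ) : det4 a a c d = 0 :=
  Matrix.det_zero_of_column_eq (i := 0) (j := 1) (by decide) fun _ => rfl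

lemma det4_swap_pairs (a b c d : Fin 4 → ℂ) : det4 a b c d = det4 c d a b := by
  simp only [det4_expand]; ring

lemma det4_cycle_first_three (a b c d : Fin 4 → ℂ) : det4 a b c d = det4 b c a d := by
  simp only [det4_expand]; ring

lemma det4_cycle_last_three (a b c d : Fin 4 → ℂ) : det4 a b c d = det4 a d b c := by
  simp only [det4_expand]; ring

lemma det4_swap_middle (a b c d : Fin 4 → ℂ) : det4 a b c d = -det4 a c b d := by
  simp only [det4_expand]; ring

lemma det4_plucker (x y a b c d : Fin 4 → ℂ) :
    det4 x y a b * det4 x y c d = det4 x y a c * det4 x y b d + det4 x y a d * det4 x y c b := by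
  simp only [det4_expand]; ring

lemma chain233_of_eq_left (x1 x2 y1 y2 u1 u2 u3 : Fin 4 → ℂ) :
    chain233 x1 x2 y1 y2 u1 u1 u2 u3
      = det4 x1 x2 y2 u1 * det4 y1 u1 u2 u3 - det4 x1 x2 y1 u1 * det4 y2 u1 u2 u3 := by
  simp only [chain233, det4_self_left, mul_zero, add_zero]

theorem exchange_relation_1678_general (z1 z2 z5 z6 z7 z8 z9 : Fin 4 → ℂ) :
    det4 z1 z6 z7 z8 * chain233 z1 z2 z5 z6 z7 z7 z8 z9
    = det4 z1 z2 z7 z8 * det4 z1 z5 z6 z7 * det4 z6 z7 z8 z9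
      + det4 z1 z2 z6 z7 * det4 z1 z7 z8 z9 * det4 z5 z6 z7 z8 := by
  have plucker_78 : det4 z1 z6 z7 z8 * det4 z5 z7 z8 z9
      = det4 z1 z5 z7 z8 * det4 z6 z7 z8 z9 + det4 z1 z7 z8 z9 * det4 z5 z6 z7 z8 := by
    rw [det4_swap_pairs z1 z6, det4_swap_pairs z1 z5, det4_swap_pairs z5 z6,
      det4_cycle_first_three z5, det4_cycle_first_three z6, det4_cycle_first_three z1 z7]
    exact det4_plucker z7 z8 z1 z6 z5 z9
  have plucker_17 : det4 z1 z2 z6 z7 * det4 z1 z5 z7 z8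
      = det4 z1 z6 z7 z8 * det4 z1 z2 z5 z7 + det4 z1 z2 z7 z8 * det4 z1 z5 z6 z7 := by
    rw [det4_cycle_last_three z1 z2 z6, det4_cycle_last_three z1 z2 z5,
      det4_cycle_last_three z1 z5 z6, det4_swap_middle z1 z5, det4_swap_middle z1 z6,
      det4_swap_middle z1 z2 z7]
    linear_combination -det4_plucker z1 z7 z2 z6 z5 z8
  rw [chain233_of_eq_left]
  linear_combination det4 z1 z2 z6 z7 * plucker_78 + det4 z6 z7 z8 z9 * plucker_17

/-- For all vectors `z₁, …, z₉ ∈ ℂ⁴`, the three-term cluster exchange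
relation
`⟨1678⟩·⟨12 * 567 * 789⟩ = ⟨1278⟩·⟨1567⟩·⟨6789⟩ + ⟨1267⟩·⟨1789⟩·⟨5678⟩`
holds, where `⟨12 * 567 * 789⟩` is the chain polynomial with blocks `(z₁,z₂)`,
`(z₅,z₆,z₇)`, `(z₇,z₈,z₉)`. -/
theorem exchange_relation_1678 (z1 z2 z3 z4 z5 z6 z7 z8 z9 : Fin 4 → ℂ) :
    det4 z1 z6 z7 z8 * chain233 z1 z2 z5 z6 z7 z7 z8 z9
    = det4 z1 z2 z7 z8 * det4 z1 z5 z6 z7 * det4 z6 z7 z8 z9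
      + det4 z1 z2 z6 z7 * det4 z1 z7 z8 z9 * det4 z5 z6 z7 z8 :=
  exchange_relation_1678_general z1 z2 z5 z6 z7 z8 z9

end
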